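/- arXiv:2004.05907 — 3 statements merged into one kernel-verified Lean document; each statement's English description precedes it below -/
import Mathlib

section
/- Let R be a commutative ring and M an m × m matrix over R. In the formal power series ring R[[t]], one has det(1 − t·M) · (∑_{n≥1} Tr(M^n) t^n) = −t · d/dt (det(1 − t·M)). Equivalently, the logarithmic derivative t·(d/dt) log(det(1 − t·M)^{-1}) has n-th coefficient Tr(M^n) for all n ≥ 1. -/
/-!
Put `A = 1 - X • M` over `R⟦X⟧`. Jacobi's formula gives `(det A)' = tr (adj A · A') =
- tr (adj A · M)`. The geometric series `G = ∑ Xᵏ Mᵏ` inverts `A`, so `adj A = det A • G`, and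
`X M G = G - 1` has trace `∑_{k ≥ 1} tr (Mᵏ) Xᵏ`. Hence
`det A · ∑_{k ≥ 1} tr (Mᵏ) Xᵏ = X · tr (adj A · M) = - X (det A)'`.
-/

open PowerSeries Matrix

namespace Derivation

variable {R A M : Type*} [CommSemiring R] [CommSemiring A] [Algebra R A]
  [AddCommMonoid M] [Module A M] [Module R M] (D : Derivation R A M)

theorem leibniz_finset_prod {ι : Type*} [DecidableEq ι] (s : Finset ι) (f : ι → A) :
    D (∏ i ∈ s, f i) = ∑ i ∈ s, (∏ j ∈ s.erase i, f j) • D (f i) := by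
  induction s using Finset.induction_on with
  | empty => simp
  | insert a s ha ih =>
    rw [Finset.prod_insert ha, leibniz, ih, Finset.sum_insert ha, Finset.erase_insert ha,
      Finset.smul_sum, add_comm]
    congr 1
    refine Finset.sum_congr rfl fun i hi => ?_
    rw [Finset.erase_insert_of_ne (ne_of_mem_of_not_mem hi ha).symm,
      Finset.prod_insert fun h => ha (Finset.mem_of_mem_erase h), mul_smul]

end Derivation

namespace Matrix

variable {n : Type*} [Fintype n] [DecidableEq n]

theorem trace_adjugate_mul {α : Type*} [CommRing α] (B C : Matrix n n α) :
    trace (adjugate B * C) = ∑ i, (B.updateCol i fun k => C k i).det := by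
  simp_rw [← cramer_apply, cramer_eq_adjugate_mulVec, trace, diag, mulVec, mul_apply, dotProduct]

end Matrix

namespace Derivation

variable {R A n : Type*} [CommSemiring R] [CommRing A] [Algebra R A] [Fintype n] [DecidableEq n]
  (D : Derivation R A A)

theorem map_det_eq_sum_det_updateCol (B : Matrix n n A) :
    D B.det = ∑ i, (B.updateCol i fun k => D (B k i)).det := by
  simp_rw [det_apply, map_sum, Units.smul_def, map_zsmul, leibniz_finset_prod, smul_eq_mul,
    Finset.smul_sum]
  rw [Finset.sum_comm]
  refine Finset.sum_congr rfl fun i _ => Finset.sum_congr rfl fun σ _ => ?_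
  rw [← Finset.mul_prod_erase Finset.univ _ (Finset.mem_univ i), updateCol_self, mul_comm]
  congr 2
  exact Finset.prod_congr rfl fun j hj => (updateCol_ne (Finset.ne_of_mem_erase hj)).symm

theorem map_det (B : Matrix n n A) : D B.det = trace (adjugate B * B.map D) := by
  rw [map_det_eq_sum_det_updateCol, trace_adjugate_mul]
  rfl

end Derivation

namespace Matrix

variable {R n : Type*} [CommRing R] [Fintype n] [DecidableEq n]

theorem adjugate_eq_det_smul_of_mul_eq_one {A B : Matrix n n R}
    (h : A * B = 1) : adjugate A = A.det • B := by
  rw [← mul_one (adjugate A), ← h, ← mul_assoc, adjugate_mul, smul_mul_assoc, one_mul]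

noncomputable def geomSeries (M : Matrix n n R) : Matrix n n R⟦X⟧ :=
  of fun i j => mk fun k => (M ^ k) i j

@[simp]
theorem coeff_geomSeries (M : Matrix n n R) (i j : n) (k : ℕ) :
    coeff k (geomSeries M i j) = (M ^ k) i j := by
  simp [geomSeries]

theorem X_smul_map_C_mul_geomSeries (M : Matrix n n R) :
    (X : R⟦X⟧) • M.map C * geomSeries M = geomSeries M - 1 := by
  ext i j k
  rw [smul_mul_assoc, smul_apply, smul_eq_mul]
  cases k with
  | zero => simp [one_apply, apply_ite (constantCoeff (R := R)), geomSeries]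
  | succ k =>
    simp [coeff_succ_X_mul, mul_apply, one_apply, apply_ite (coeff (R := R) (k + 1)), pow_succ']

theorem one_sub_X_smul_map_C_mul_geomSeries (M : Matrix n n R) :
    (1 - (X : R⟦X⟧) • M.map C) * geomSeries M = 1 := by
  rw [sub_mul, one_mul, X_smul_map_C_mul_geomSeries, sub_sub_cancel]

theorem trace_geomSeries_sub_one (M : Matrix n n R) :
    trace (geomSeries M - 1) = mk fun k => if k = 0 then 0 else trace (M ^ k) := by
  ext k
  simp only [trace, diag, sub_apply, map_sum, map_sub, coeff_geomSeries, one_apply, coeff_mk]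
  cases k <;> simp

omit [Fintype n] in
theorem map_derivative_one_sub_X_smul_map_C (M : Matrix n n R) :
    (1 - (X : R⟦X⟧) • M.map C).map (d⁄dX R) = -M.map C := by
  ext i j : 1
  simp [one_apply, apply_ite (d⁄dX R), Derivation.leibniz]

end Matrix

/-- In `R⟦t⟧` one has `det(1 - t·M) · ∑_{n≥1} Tr(Mⁿ) tⁿ = - t · d/dt det(1 - t·M)`:
the logarithmic derivative of `det(1 - t·M)⁻¹` has `n`-th coefficient `Tr(Mⁿ)`. -/
theorem det_one_sub_smul_mul_trace_powerSeries {R : Type*} [CommRing R] (m : ℕ)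
    (M : Matrix (Fin m) (Fin m) R) :
    Matrix.det (1 - (PowerSeries.X : R⟦X⟧) • M.map (PowerSeries.C (R := R))) *
        (PowerSeries.mk fun n => if n = 0 then 0 else Matrix.trace (M ^ n)) =
      - (PowerSeries.X *
        PowerSeries.derivativeFun
          (Matrix.det (1 - (PowerSeries.X : R⟦X⟧) • M.map (PowerSeries.C (R := R))))) := by
  set A := 1 - (X : R⟦X⟧) • M.map C
  have jacobi : derivativeFun A.det = -trace (adjugate A * M.map C) := by
    rw [show derivativeFun A.det = d⁄dX R A.det from rfl, Derivation.map_det,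
      map_derivative_one_sub_X_smul_map_C, mul_neg, trace_neg]
  have hadj : adjugate A = A.det • geomSeries M :=
    adjugate_eq_det_smul_of_mul_eq_one (one_sub_X_smul_map_C_mul_geomSeries M)
  calc A.det * _ = A.det * trace ((X : R⟦X⟧) • M.map C * geomSeries M) := by
        rw [X_smul_map_C_mul_geomSeries, trace_geomSeries_sub_one]
    _ = X * trace (adjugate A * M.map C) := by
        rw [hadj, smul_mul_assoc, trace_smul, smul_mul_assoc, trace_smul, trace_mul_comm,
          smul_eq_mul, smul_eq_mul, mul_left_comm]
    _ = _ := by rw [jacobi, mul_neg, neg_neg]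
end

section
/- If a, b : ℕ → ℤ are integer linear recursive sequences, then their pointwise (Hadamard) product n ↦ a(n)·b(n) is again an integer linear recursive sequence. -/
/-- A sequence `a : ℕ → ℤ` is an integer linear recursive sequence if there are
`k ≥ 1` and integers `B₁, …, B_k` with `a n = B₁·a (n-1) + ⋯ + B_k·a (n-k)` for
all `n ≥ k`. -/
def IsLinearRecursive (a : ℕ → ℤ) : Prop :=
  ∃ k : ℕ, 1 ≤ k ∧ ∃ B : Fin k → ℤ,
    ∀ n : ℕ, k ≤ n → a n = ∑ j : Fin k, B j * a (n - (j + 1))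

/-!
A sequence is linear recursive exactly when it lies in a finitely generated submodule of
`ℕ → ℤ` stable under the shift `f ↦ (n ↦ f (n + 1))`: the first `k` shifts span such a
submodule, and conversely Cayley–Hamilton for the shift restricted to it yields a monic
annihilating polynomial. The shift is a ring endomorphism for the pointwise product, so if
`a ∈ M` and `b ∈ N` with `M`, `N` finitely generated and stable, then `a * b` lies in the
finitely generated stable submodule `M * N`.
-/

open Polynomial Submodule

namespace Sequence

variable (R : Type*) [CommRing R]

def shift : (ℕ → R) →ₐ[R] (ℕ → R) :=
  AlgHom.pi fun n => Pi.evalAlgHom R (fun _ => R) (n + 1)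

variable {R}

@[simp]
theorem shift_apply (f : ℕ → R) (n : ℕ) : shift R f n = f (n + 1) := rfl

theorem shift_iterate_apply (f : ℕ → R) (m n : ℕ) : (shift R)^[m] f n = f (n + m) := by
  induction m generalizing f with
  | zero => rfl
  | succ m ih => rw [Function.iterate_succ_apply, ih, shift_apply, add_assoc]

theorem aeval_shift_apply (p : R[X]) (f : ℕ → R) (n : ℕ) :
    aeval (shift R).toLinearMap p f n =
      ∑ i ∈ Finset.range (p.natDegree + 1), p.coeff i * f (n + i) := by
  simp [aeval_eq_sum_range, Module.End.pow_apply, shift_iterate_apply]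

theorem map_shift_mul_le {M N : Submodule R (ℕ → R)} (hM : M.map (shift R).toLinearMap ≤ M)
    (hN : N.map (shift R).toLinearMap ≤ N) : (M * N).map (shift R).toLinearMap ≤ M * N := by
  rw [Submodule.map_mul]
  exact mul_le_mul' hM hN

theorem exists_monic_aeval_shift_eq_zero {M : Submodule R (ℕ → R)} (hfg : M.FG)
    (hM : M.map (shift R).toLinearMap ≤ M) {f : ℕ → R} (hf : f ∈ M) :
    ∃ p : R[X], p.Monic ∧ aeval (shift R).toLinearMap p f = 0 := by
  have : Module.Finite R M := Module.Finite.iff_fg.mpr hfg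
  have hmaps : ∀ x ∈ M, (shift R).toLinearMap x ∈ M := fun x hx => hM (mem_map_of_mem hx)
  obtain ⟨p, hp, hτ⟩ :=
    LinearMap.exists_monic_and_aeval_eq_zero R ((shift R).toLinearMap.restrict hmaps)
  refine ⟨p, hp, ?_⟩
  have hτf := congrArg (fun g => (g ⟨f, hf⟩ : ℕ → R)) hτ
  simp only [aeval_eq_sum_range, Module.End.pow_restrict _ hmaps] at hτf
  simpa [aeval_eq_sum_range] using hτf

theorem shift_iterate_eq_sum {a : ℕ → R} {k : ℕ} {B : Fin k → R}
    (hB : ∀ n, k ≤ n → a n = ∑ j : Fin k, B j * a (n - (j + 1))) :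
    (shift R)^[k] a = ∑ j : Fin k, B j • (shift R)^[k - 1 - j] a := by
  ext n
  simp only [shift_iterate_apply, Finset.sum_apply, Pi.smul_apply, smul_eq_mul]
  rw [hB (n + k) (Nat.le_add_left k n)]
  refine Finset.sum_congr rfl fun j _ => ?_
  have := j.isLt
  congr 2
  omega

end Sequence

open Sequence

theorem IsLinearRecursive.exists_fg_shift_stable {a : ℕ → ℤ} (ha : IsLinearRecursive a) :
    ∃ M : Submodule ℤ (ℕ → ℤ), M.FG ∧ M.map (shift ℤ).toLinearMap ≤ M ∧ a ∈ M := by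
  obtain ⟨k, hk, B, hB⟩ := ha
  refine ⟨span ℤ (Set.range fun i : Fin k => (shift ℤ)^[i] a), fg_span (Set.finite_range _),
    ?_, subset_span ⟨⟨0, hk⟩, rfl⟩⟩
  rw [map_span_le]
  rintro _ ⟨i, rfl⟩
  rw [AlgHom.toLinearMap_apply, ← Function.iterate_succ_apply' (shift ℤ)]
  rcases Nat.lt_or_ge (i + 1) k with hik | hik
  · exact subset_span ⟨⟨i + 1, hik⟩, rfl⟩
  · rw [show (i : ℕ).succ = k by omega, shift_iterate_eq_sum hB]
    exact sum_mem fun j _ => smul_mem _ _ (subset_span ⟨⟨k - 1 - j, by omega⟩, rfl⟩)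

theorem isLinearRecursive_of_aeval_shift_eq_zero {a : ℕ → ℤ} {p : ℤ[X]} (hp : p.Monic)
    (hdeg : 1 ≤ p.natDegree) (h : aeval (shift ℤ).toLinearMap p a = 0) : IsLinearRecursive a := by
  set D := p.natDegree
  refine ⟨D, hdeg, fun j => -p.coeff (D - 1 - j), fun n hn => ?_⟩
  have hrec := congrFun h (n - D)
  rw [aeval_shift_apply, Finset.sum_range_succ, hp.coeff_natDegree, one_mul,
    Nat.sub_add_cancel hn, Pi.zero_apply] at hrec
  let g (i : ℕ) : ℤ := -p.coeff i * a (n - D + i)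
  calc a n = ∑ i ∈ Finset.range D, g i := by
        simp only [g, neg_mul, Finset.sum_neg_distrib]; linarith
    _ = ∑ j ∈ Finset.range D, g (D - 1 - j) := (Finset.sum_range_reflect g D).symm
    _ = ∑ j : Fin D, -p.coeff (D - 1 - j) * a (n - (j + 1)) := by
        rw [Fin.sum_univ_eq_sum_range (fun j => -p.coeff (D - 1 - j) * a (n - (j + 1)))]
        refine Finset.sum_congr rfl fun j hj => ?_
        have := Finset.mem_range.mp hj
        simp only [g]
        congr 2
        omega

theorem isLinearRecursive_iff_exists_fg_shift_stable {a : ℕ → ℤ} :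
    IsLinearRecursive a ↔
      ∃ M : Submodule ℤ (ℕ → ℤ), M.FG ∧ M.map (shift ℤ).toLinearMap ≤ M ∧ a ∈ M := by
  refine ⟨IsLinearRecursive.exists_fg_shift_stable, ?_⟩
  rintro ⟨M, hfg, hM, ha⟩
  obtain ⟨p, hp, hpa⟩ := exists_monic_aeval_shift_eq_zero hfg hM ha
  -- the definition demands order `k ≥ 1`, and `p` may be constant (when `a = 0`)
  refine isLinearRecursive_of_aeval_shift_eq_zero (p := X * p) (monic_X.mul hp) ?_ ?_
  · rw [natDegree_X_mul hp.ne_zero]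
    omega
  · rw [map_mul, aeval_X, Module.End.mul_apply, hpa, map_zero]

/-- The pointwise (Hadamard) product of two integer linear recursive sequences is linear recursive. -/
theorem isLinearRecursive_mul (a b : ℕ → ℤ)
    (ha : IsLinearRecursive a) (hb : IsLinearRecursive b) :
    IsLinearRecursive (fun n => a n * b n) := by
  obtain ⟨M, hMfg, hM, haM⟩ := isLinearRecursive_iff_exists_fg_shift_stable.mp ha
  obtain ⟨N, hNfg, hN, hbN⟩ := isLinearRecursive_iff_exists_fg_shift_stable.mp hb
  exact isLinearRecursive_iff_exists_fg_shift_stable.mpr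
    ⟨M * N, hMfg.mul hNfg, map_shift_mul_le hM hN, mul_mem_mul haM hbN⟩
end

section
/- Let F ∈ ℚ[[t]] be the unique power series with constant coefficient 1 satisfying the differential equation (1 − t)² · F′ = F (namely F = exp(t/(1−t)) = exp(∑_{n≥1} t^n)). Then F is not rational: there exist no polynomials p, q ∈ ℚ[t] with q ≠ 0 such that q · F = p in ℚ[[t]]. -/
/-!
If `q F = p` with `F` solving `g F' = F`, then `W(q, p) = q p' - q' p = q² F'`, hence
`q p = g · W(q, p)`. For `g = (X - 1)²` this is impossible: each factor of `W(q, p)` loses at most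
one order of vanishing at `1`, so the right-hand side vanishes at `1` to order greater than
`ord₁ q + ord₁ p`, the order of the left-hand side.
-/

open PowerSeries

namespace Polynomial

variable {R : Type*} [CommRing R]

theorem pow_dvd_wronskian_of_pow_dvd {r a b : R[X]} {m n : ℕ} (ha : r ^ m ∣ a)
    (hb : r ^ n ∣ b) : r ^ (m + n - 1) ∣ wronskian a b := by
  have hab' : r ^ (m + (n - 1)) ∣ a * derivative b := by
    rw [pow_add]; exact mul_dvd_mul ha (pow_sub_one_dvd_derivative_of_pow_dvd hb)
  have ha'b : r ^ (m - 1 + n) ∣ derivative a * b := by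
    rw [pow_add]; exact mul_dvd_mul (pow_sub_one_dvd_derivative_of_pow_dvd ha) hb
  exact dvd_sub ((pow_dvd_pow r (by omega)).trans hab') ((pow_dvd_pow r (by omega)).trans ha'b)

theorem mul_ne_sq_mul_wronskian [IsDomain R] {a b : R[X]} (hab : a * b ≠ 0) (c : R) :
    a * b ≠ (X - C c) ^ 2 * wronskian a b := by
  intro h
  have hdvd : (X - C c) ^ (2 + (a.rootMultiplicity c + b.rootMultiplicity c - 1)) ∣ a * b := by
    rw [h, pow_add]
    exact mul_dvd_mul_left _ <|
      pow_dvd_wronskian_of_pow_dvd (a.pow_rootMultiplicity_dvd c) (b.pow_rootMultiplicity_dvd c)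
  have hle := (le_rootMultiplicity_iff hab).2 hdvd
  rw [rootMultiplicity_mul hab] at hle
  omega

theorem mul_eq_mul_wronskian_of_coe_mul_eq {F : R⟦X⟧} {g p q : R[X]}
    (hF : (g : R⟦X⟧) * d⁄dX R F = F) (hqF : (q : R⟦X⟧) * F = p) :
    q * p = g * wronskian q p := by
  have hd : ((derivative p : R[X]) : R⟦X⟧) = (derivative q : R[X]) * F + q * d⁄dX R F := by
    rw [← derivative_coe, ← derivative_coe, ← hqF, Derivation.leibniz, smul_eq_mul, smul_eq_mul]
    ring
  apply coe_inj.1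
  push_cast [wronskian]
  linear_combination (-(g : R⟦X⟧) * q) * hd + (-(g : R⟦X⟧) * (derivative q : R[X]) - q) * hqF
    - (q : R⟦X⟧) ^ 2 * hF

end Polynomial

/-- The power series `F = exp(t/(1-t))`, characterized as the unique solution with
constant coefficient `1` of `(1-t)²·F′ = F`, is not rational: there are no
polynomials `p, q` with `q ≠ 0` and `q·F = p` in `ℚ⟦t⟧`. -/
theorem exp_geom_not_rational (F : PowerSeries ℚ)
    (hF0 : PowerSeries.constantCoeff F = 1)
    (hF : (1 - PowerSeries.X) ^ 2 * F.derivativeFun = F) :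
    ¬ ∃ p q : Polynomial ℚ, q ≠ 0 ∧ (q : PowerSeries ℚ) * F = (p : PowerSeries ℚ) := by
  rintro ⟨p, q, hq, hqF⟩
  have hF0' : F ≠ 0 := fun h => by simp [h] at hF0
  have hp : p ≠ 0 := by
    rintro rfl
    simp [hq, hF0'] at hqF
  have hsq : (((Polynomial.X - Polynomial.C 1) ^ 2 : Polynomial ℚ) : PowerSeries ℚ) =
      (1 - PowerSeries.X) ^ 2 := by
    rw [Polynomial.C_1]; push_cast; ring
  have hF' : (((Polynomial.X - Polynomial.C 1) ^ 2 : Polynomial ℚ) : PowerSeries ℚ) *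
      d⁄dX ℚ F = F := by
    rw [hsq]; exact hF
  exact Polynomial.mul_ne_sq_mul_wronskian (mul_ne_zero hq hp) 1
    (Polynomial.mul_eq_mul_wronskian_of_coe_mul_eq hF' hqF)
end
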